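/- Uniqueness and variational characterization of the critical value: Let H : ℝ^N × ℝ^N → ℝ be continuous and ℤ^N-periodic in its first variable and let P ∈ ℝ^N. If (u, c) and (v, d) are both solutions of the cell problem H(x, Du + P) = a on T^N, then c = d; moreover c = inf{a ∈ ℝ : there exists a Lipschitz continuous ℤ^N-periodic viscosity subsolution of H(x, Du + P) = a on T^N} = sup{a ∈ ℝ : there exists a Lipschitz continuous ℤ^N-periodic viscosity supersolution of H(x, Dv + P) = a on T^N}. -/

import Mathlib

open Set Filter MeasureTheory

noncomputable section

abbrev Euc (N : ℕ) := EuclideanSpace ℝ (Fin N)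

def intVec {N : ℕ} (z : Fin N → ℤ) : Euc N :=
  (EuclideanSpace.equiv (Fin N) ℝ).symm (fun i => (z i : ℝ))

def IsZPeriodic {N : ℕ} (u : Euc N → ℝ) : Prop :=
  ∀ (x : Euc N) (z : Fin N → ℤ), u (x + intVec z) = u x

def IsZPeriodicH {N : ℕ} (H : Euc N → Euc N → ℝ) : Prop :=
  ∀ (x p : Euc N) (z : Fin N → ℤ), H (x + intVec z) p = H x p

def superDiff {N : ℕ} (u : Euc N → ℝ) (x : Euc N) : Set (Euc N) :=
  { q | ∃ φ : Euc N → ℝ, ContDiff ℝ 1 φ ∧ IsZPeriodic φ ∧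
        (∀ y, u y - φ y ≤ u x - φ x) ∧ q = gradient φ x }

def subDiff {N : ℕ} (u : Euc N → ℝ) (x : Euc N) : Set (Euc N) :=
  { q | ∃ φ : Euc N → ℝ, ContDiff ℝ 1 φ ∧ IsZPeriodic φ ∧
        (∀ y, u x - φ x ≤ u y - φ y) ∧ q = gradient φ x }

def IsCellSubsolution {N : ℕ} (H : Euc N → Euc N → ℝ) (P : Euc N) (a : ℝ) (u : Euc N → ℝ) : Prop :=
  ∀ x, ∀ q ∈ superDiff u x, H x (q + P) ≤ a

def IsCellSupersolution {N : ℕ} (H : Euc N → Euc N → ℝ) (P : Euc N) (a : ℝ) (u : Euc N → ℝ) : Prop :=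
  ∀ x, ∀ q ∈ subDiff u x, a ≤ H x (q + P)

def IsCellSolution {N : ℕ} (H : Euc N → Euc N → ℝ) (P : Euc N) (u : Euc N → ℝ) (a : ℝ) : Prop :=
  (∃ K : NNReal, LipschitzWith K u) ∧ IsZPeriodic u ∧
    IsCellSubsolution H P a u ∧ IsCellSupersolution H P a u

def IsCoerciveH {N : ℕ} (H : Euc N → Euc N → ℝ) : Prop :=
  ∀ C : ℝ, ∃ r : ℝ, ∀ x p : Euc N, r ≤ ‖p‖ → C ≤ H x p

/-!
Everything rests on a comparison principle: a periodic subsolution at level `a` and a Lipschitz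
periodic supersolution at level `b` force `b ≤ a`. To see it, maximise
`w x - v y - n ∑ᵢ (1 - cos 2π(x - y)ᵢ)`, a doubling of variables with a penalty that is periodic
and vanishes exactly on the lattice. At a maximum `(x₀, y₀)` the gradient `p` of the penalty is
a superdifferential of `w` at `x₀` and a subdifferential of `v` at `y₀`, so
`b ≤ H(y₀, p + P)` and `H(x₀, p + P) ≤ a`, while `‖p‖` is bounded by the Lipschitz constant of
`v`. The penalty at the maximum is at most the oscillation of `w`, so `x₀ - y₀` lies within
`O(n^{-1/2})` of a lattice point; by periodicity and uniform continuity of `H` on bounded momenta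
the two values of `H` differ by less than `b - a` for large `n`.

Applied to two solutions, comparison gives `c = d`; applied to a solution and an arbitrary
sub- or supersolution, it shows that `c` is the least and greatest element of the two sets.
-/

open Real

variable {N : ℕ}

lemma intVec_apply (z : Fin N → ℤ) (i : Fin N) : intVec z i = z i := rfl

lemma intVec_neg (z : Fin N → ℤ) : intVec (-z) = -intVec z := by
  ext i; simp [intVec_apply]

lemma intVec_sub (z z' : Fin N → ℤ) : intVec (z - z') = intVec z - intVec z' := by
  ext i; simp [intVec_apply]

lemma IsZPeriodic.comp_sub_const {φ : Euc N → ℝ} (hφ : IsZPeriodic φ) (y : Euc N) :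
    IsZPeriodic fun x => φ (x - y) := by
  intro x z
  simp only [add_sub_right_comm x]
  exact hφ _ _

lemma IsZPeriodic.comp_const_sub {φ : Euc N → ℝ} (hφ : IsZPeriodic φ) (x : Euc N) :
    IsZPeriodic fun y => φ (x - y) := by
  intro y z
  simp only [sub_add_eq_sub_sub, sub_eq_add_neg _ (intVec z), ← intVec_neg]
  exact hφ _ _

def unitCube (N : ℕ) : Set (Euc N) := WithLp.toLp 2 '' Icc 0 1

lemma isCompact_unitCube : IsCompact (unitCube N) :=
  isCompact_Icc.image (PiLp.continuous_toLp 2 _)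

lemma exists_sub_intVec_mem_unitCube (x : Euc N) : ∃ z, x - intVec z ∈ unitCube N := by
  refine ⟨fun i => ⌊x i⌋, fun i => Int.fract (x i), ⟨fun i => Int.fract_nonneg _,
    fun i => (Int.fract_lt_one _).le⟩, ?_⟩
  ext i
  rfl

lemma exists_forall_ge_of_range_subset_image {X α : Type*} [TopologicalSpace X] [LinearOrder α]
    [TopologicalSpace α] [ClosedIciTopology α] {K : Set X}
    (hK : IsCompact K) (hne : K.Nonempty) {f : X → α} (hf : Continuous f)
    (hrange : range f ⊆ f '' K) : ∃ x, ∀ y, f y ≤ f x := by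
  obtain ⟨x, -, hx⟩ := hK.exists_isMaxOn hne hf.continuousOn
  refine ⟨x, fun y => ?_⟩
  obtain ⟨y', hy', hyy'⟩ := hrange (mem_range_self y)
  exact hyy' ▸ hx hy'

lemma exists_forall_ge_of_isZPeriodic₂ {α : Type*} [LinearOrder α] [TopologicalSpace α]
    [ClosedIciTopology α] {Φ : Euc N → Euc N → α}
    (hΦ : Continuous fun q : Euc N × Euc N => Φ q.1 q.2)
    (hper : ∀ x y (zx zy : Fin N → ℤ), Φ (x + intVec zx) (y + intVec zy) = Φ x y) :
    ∃ x₀ y₀, ∀ x y, Φ x y ≤ Φ x₀ y₀ := by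
  have hne : (unitCube N).Nonempty := ⟨_, 0, ⟨le_rfl, zero_le_one⟩, rfl⟩
  obtain ⟨⟨x₀, y₀⟩, h⟩ := exists_forall_ge_of_range_subset_image
    (isCompact_unitCube.prod isCompact_unitCube) (hne.prod hne) hΦ (by
      rintro _ ⟨⟨x, y⟩, rfl⟩
      obtain ⟨zx, hzx⟩ := exists_sub_intVec_mem_unitCube x
      obtain ⟨zy, hzy⟩ := exists_sub_intVec_mem_unitCube y
      refine ⟨(x - intVec zx, y - intVec zy), mk_mem_prod hzx hzy, ?_⟩
      simp only [← hper (x - intVec zx) (y - intVec zy) zx zy, sub_add_cancel])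
  exact ⟨x₀, y₀, fun x y => h (x, y)⟩

lemma IsZPeriodicH.exists_pos_forall_dist_lt {H : Euc N → Euc N → ℝ}
    (hHc : Continuous fun q : Euc N × Euc N => H q.1 q.2) (hHp : IsZPeriodicH H)
    (R : ℝ) {ε : ℝ} (hε : 0 < ε) :
    ∃ δ > 0, ∀ x x' p, ‖p‖ ≤ R → dist x x' < δ → dist (H x p) (H x' p) < ε := by
  obtain ⟨r, hr⟩ := (isCompact_unitCube (N := N)).isBounded.subset_closedBall 0
  have hUC := ((isCompact_closedBall (0 : Euc N) (r + 1)).prod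
    (isCompact_closedBall (0 : Euc N) R)).uniformContinuousOn_of_continuous hHc.continuousOn
  obtain ⟨δ, hδ, hHδ⟩ := Metric.uniformContinuousOn_iff.1 hUC ε hε
  refine ⟨min δ 1, lt_min hδ one_pos, fun x x' p hp hxx' => ?_⟩
  obtain ⟨z, hz⟩ := exists_sub_intVec_mem_unitCube x
  have hxr : ‖x - intVec z‖ ≤ r := mem_closedBall_zero_iff.1 (hr hz)
  have hdist : dist (x - intVec z) (x' - intVec z) < min δ 1 := by
    rwa [dist_sub_right]
  have hx'r : ‖x' - intVec z‖ ≤ r + 1 := by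
    have := norm_le_norm_add_norm_sub' (x' - intVec z) (x - intVec z)
    rw [← dist_eq_norm (x' - intVec z), dist_comm] at this
    linarith [min_le_right δ 1]
  have := hHδ (x - intVec z, p) ⟨by simpa using hxr.trans (by linarith), by simpa using hp⟩
    (x' - intVec z, p) ⟨by simpa using hx'r, by simpa using hp⟩
    (by rw [Prod.dist_eq, dist_self]; exact max_lt (hdist.trans_le (min_le_left _ _)) hδ)
  have hshift : ∀ y, H (y - intVec z) p = H y p := fun y => by
    rw [← hHp (y - intVec z) p z, sub_add_cancel]
  rwa [hshift, hshift] at this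

def torusPenalty (ξ : Euc N) : ℝ := ∑ i, (1 - cos (2 * π * ξ i))

@[simp]
lemma torusPenalty_zero : torusPenalty (0 : Euc N) = 0 := by
  simp [torusPenalty]

lemma isZPeriodic_torusPenalty : IsZPeriodic (torusPenalty (N := N)) := by
  intro ξ z
  refine Finset.sum_congr rfl fun i _ => ?_
  rw [PiLp.add_apply, intVec_apply, mul_add, mul_comm _ (z i : ℝ), cos_add_int_mul_two_pi]

lemma contDiff_torusPenalty {n : WithTop ℕ∞} : ContDiff ℝ n (torusPenalty (N := N)) := by
  unfold torusPenalty
  fun_prop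

lemma eight_mul_sq_sub_round_le (t : ℝ) : 8 * (t - round t) ^ 2 ≤ 1 - cos (2 * π * t) := by
  have hcos : cos (2 * π * t) = cos (2 * π * (t - round t)) := by
    rw [mul_sub, mul_comm _ (round t : ℝ), cos_sub_int_mul_two_pi]
  have habs : |2 * π * (t - round t)| ≤ π := by
    rw [abs_mul, abs_of_pos (by positivity : (0 : ℝ) < 2 * π)]
    nlinarith [abs_sub_round t, pi_pos]
  have hpi : 2 / π ^ 2 * (2 * π * (t - round t)) ^ 2 = 8 * (t - round t) ^ 2 := by
    field_simp; ring
  linarith [cos_le_one_sub_mul_cos_sq habs]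

lemma exists_sq_norm_sub_intVec_le (ξ : Euc N) :
    ∃ z, ‖ξ - intVec z‖ ^ 2 ≤ N * torusPenalty ξ / 8 := by
  refine ⟨fun i => round (ξ i), ?_⟩
  have hterm : ∀ i, (ξ i - round (ξ i)) ^ 2 ≤ torusPenalty ξ / 8 := fun i => by
    have : 1 - cos (2 * π * ξ i) ≤ torusPenalty ξ :=
      Finset.single_le_sum (f := fun j => 1 - cos (2 * π * ξ j))
        (fun j _ => sub_nonneg.2 (cos_le_one _)) (Finset.mem_univ i)
    linarith [eight_mul_sq_sub_round_le (ξ i)]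
  calc ‖ξ - intVec (fun i => round (ξ i))‖ ^ 2 = ∑ i, (ξ i - round (ξ i)) ^ 2 := by
        simp [EuclideanSpace.norm_sq_eq, intVec_apply]
    _ ≤ ∑ _i : Fin N, torusPenalty ξ / 8 := Finset.sum_le_sum fun i _ => hterm i
    _ = N * torusPenalty ξ / 8 := by simp [mul_div_assoc]

lemma gradient_mem_superDiff_and_subDiff_of_max_doubling {w v φ : Euc N → ℝ}
    (hφ : ContDiff ℝ 1 φ) (hφP : IsZPeriodic φ) {x₀ y₀ : Euc N}
    (hmax : ∀ x y, w x - v y - φ (x - y) ≤ w x₀ - v y₀ - φ (x₀ - y₀)) :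
    gradient φ (x₀ - y₀) ∈ superDiff w x₀ ∧ gradient φ (x₀ - y₀) ∈ subDiff v y₀ := by
  have hφ' : HasFDerivAt φ (InnerProductSpace.toDual ℝ _ (gradient φ (x₀ - y₀))) (x₀ - y₀) :=
    hasGradientAt_iff_hasFDerivAt.1 ((hφ.differentiable one_ne_zero) _).hasGradientAt
  refine ⟨⟨fun x => φ (x - y₀), hφ.comp (contDiff_id.sub contDiff_const),
      hφP.comp_sub_const y₀, fun x => by linarith [hmax x y₀], ?_⟩,
    ⟨fun y => -φ (x₀ - y), (hφ.comp (contDiff_const.sub contDiff_id)).neg,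
      fun y z => by simp only [hφP.comp_const_sub x₀ y z], fun y => by linarith [hmax x₀ y], ?_⟩⟩
  · exact (hasGradientAt_iff_hasFDerivAt.2 ((hasFDerivAt_comp_sub y₀).2 hφ')).gradient.symm
  · refine (hasGradientAt_iff_hasFDerivAt.2 ?_).gradient.symm
    exact ((hφ'.comp y₀ ((hasFDerivAt_id y₀).const_sub x₀)).neg).congr_fderiv (by ext; simp)

lemma norm_le_of_mem_subDiff {v : Euc N → ℝ} {K : NNReal} (hv : LipschitzWith K v) {y : Euc N}
    {p : Euc N} (hp : p ∈ subDiff v y) : ‖p‖ ≤ K := by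
  obtain ⟨φ, hφ, -, hmin, rfl⟩ := hp
  have hline : HasLineDerivAt ℝ φ (‖gradient φ y‖ ^ 2) y (gradient φ y) := by
    have := (hasGradientAt_iff_hasFDerivAt.1
      ((hφ.differentiable one_ne_zero) y).hasGradientAt).hasLineDerivAt (gradient φ y)
    rwa [InnerProductSpace.toDual_apply_apply, real_inner_self_eq_norm_sq] at this
  have hslope : ‖gradient φ y‖ ^ 2 ≤ K * ‖gradient φ y‖ := by
    refine le_of_tendsto hline.tendsto_slope_zero_right ?_
    filter_upwards [self_mem_nhdsWithin] with t (ht : 0 < t)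
    have hdist : dist (y + t • gradient φ y) y = t * ‖gradient φ y‖ := by
      rw [dist_eq_norm, add_sub_cancel_left, norm_smul, Real.norm_of_nonneg ht.le]
    have hlip := (le_abs_self _).trans ((Real.dist_eq _ _).symm.trans_le
      (hv.dist_le_mul (y + t • gradient φ y) y))
    rw [smul_eq_mul, inv_mul_le_iff₀ ht]
    nlinarith [hmin (y + t • gradient φ y)]
  by_contra! hK
  nlinarith [K.coe_nonneg, norm_nonneg (gradient φ y)]

lemma le_of_isCellSubsolution_of_isCellSupersolution {H : Euc N → Euc N → ℝ}
    (hHc : Continuous fun q : Euc N × Euc N => H q.1 q.2) (hHp : IsZPeriodicH H) {P : Euc N}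
    {w v : Euc N → ℝ} {a b : ℝ} {K : NNReal}
    (hw : Continuous w) (hwP : IsZPeriodic w) (hwS : IsCellSubsolution H P a w)
    (hv : LipschitzWith K v) (hvP : IsZPeriodic v) (hvS : IsCellSupersolution H P b v) :
    b ≤ a := by
  by_contra! hab
  obtain ⟨δ, hδ, hHδ⟩ := hHp.exists_pos_forall_dist_lt hHc (K + ‖P‖) (sub_pos.2 hab)
  obtain ⟨x₁, y₁, hosc⟩ := exists_forall_ge_of_isZPeriodic₂ (Φ := fun x y => w x - w y)
    (by fun_prop) (fun x y zx zy => by rw [hwP, hwP])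
  set C := w x₁ - w y₁
  obtain ⟨n, hn⟩ := exists_nat_gt (N * C / (8 * δ ^ 2))
  rw [div_lt_iff₀ (by positivity)] at hn
  set φ : Euc N → ℝ := fun ξ => n * torusPenalty ξ
  have hφP : IsZPeriodic φ := fun ξ z => by simp only [φ, isZPeriodic_torusPenalty ξ z]
  obtain ⟨x₀, y₀, hmax⟩ := exists_forall_ge_of_isZPeriodic₂
    (Φ := fun x y => w x - v y - φ (x - y))
    (by
      have := hv.continuous
      have := contDiff_torusPenalty (N := N) (n := 0).continuous
      fun_prop)
    (fun x y zx zy => by rw [hwP, hvP, add_sub_add_comm, ← intVec_sub, hφP])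
  obtain ⟨hsuper, hsub⟩ := gradient_mem_superDiff_and_subDiff_of_max_doubling
    (contDiff_const.mul contDiff_torusPenalty) hφP hmax
  set p := gradient φ (x₀ - y₀)
  have hp : ‖p + P‖ ≤ K + ‖P‖ :=
    (norm_add_le _ _).trans (by gcongr; exact norm_le_of_mem_subDiff hv hsub)
  have hpen : n * torusPenalty (x₀ - y₀) ≤ C := by
    have := hmax y₀ y₀
    simp only [sub_self, φ, torusPenalty_zero, mul_zero] at this
    linarith [hosc x₀ y₀]
  obtain ⟨z, hz⟩ := exists_sq_norm_sub_intVec_le (x₀ - y₀)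
  have hclose : dist (x₀ - intVec z) y₀ < δ := by
    have hpen' : (N : ℝ) * (n * torusPenalty (x₀ - y₀)) ≤ N * C := by gcongr
    have hsq : (n : ℝ) * (8 * ‖x₀ - y₀ - intVec z‖ ^ 2) < n * (8 * δ ^ 2) := by
      nlinarith [mul_le_mul_of_nonneg_left hz (n.cast_nonneg : (0 : ℝ) ≤ n)]
    rw [dist_eq_norm, sub_right_comm]
    exact lt_of_pow_lt_pow_left₀ 2 hδ.le (by linarith [lt_of_mul_lt_mul_left hsq n.cast_nonneg])
  have hshift : H (x₀ - intVec z) (p + P) = H x₀ (p + P) := by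
    rw [← hHp (x₀ - intVec z) (p + P) z, sub_add_cancel]
  have := hHδ _ _ _ hp hclose
  rw [hshift, Real.dist_eq] at this
  linarith [abs_lt.1 this, hwS x₀ p hsuper, hvS y₀ p hsub]

theorem critical_value_unique_and_characterized_general {N : ℕ}
    (H : Euc N → Euc N → ℝ)
    (hHc : Continuous fun q : Euc N × Euc N => H q.1 q.2)
    (hHp : IsZPeriodicH H)
    (P : Euc N) (u v : Euc N → ℝ) (c d : ℝ)
    (hu : IsCellSolution H P u c) (hv : IsCellSolution H P v d) :
    c = d ∧
    c = sInf { a : ℝ | ∃ w : Euc N → ℝ, (∃ K : NNReal, LipschitzWith K w) ∧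
          IsZPeriodic w ∧ IsCellSubsolution H P a w } ∧
    c = sSup { a : ℝ | ∃ w : Euc N → ℝ, (∃ K : NNReal, LipschitzWith K w) ∧
          IsZPeriodic w ∧ IsCellSupersolution H P a w } := by
  obtain ⟨⟨Ku, huL⟩, huP, huSub, huSup⟩ := hu
  obtain ⟨⟨Kv, hvL⟩, hvP, hvSub, hvSup⟩ := hv
  have comparison := @le_of_isCellSubsolution_of_isCellSupersolution N H hHc hHp P
  refine ⟨le_antisymm ?_ ?_, ?_, ?_⟩
  · exact comparison hvL.continuous hvP hvSub huL huP huSup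
  · exact comparison huL.continuous huP huSub hvL hvP hvSup
  · refine Eq.symm (IsLeast.csInf_eq ⟨⟨u, ⟨Ku, huL⟩, huP, huSub⟩, ?_⟩)
    rintro a ⟨w, ⟨_, hwL⟩, hwP, hwSub⟩
    exact comparison hwL.continuous hwP hwSub huL huP huSup
  · refine Eq.symm (IsGreatest.csSup_eq ⟨⟨u, ⟨Ku, huL⟩, huP, huSup⟩, ?_⟩)
    rintro a ⟨w, ⟨_, hwL⟩, hwP, hwSup⟩
    exact comparison huL.continuous huP huSub hwL hwP hwSup

/-- Uniqueness and variational characterization of the critical value. -/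
theorem critical_value_unique_and_characterized {N : ℕ} (hN : 1 ≤ N)
    (H : Euc N → Euc N → ℝ)
    (hHc : Continuous fun q : Euc N × Euc N => H q.1 q.2)
    (hHp : IsZPeriodicH H)
    (P : Euc N) (u v : Euc N → ℝ) (c d : ℝ)
    (hu : IsCellSolution H P u c) (hv : IsCellSolution H P v d) :
    c = d ∧
    c = sInf { a : ℝ | ∃ w : Euc N → ℝ, (∃ K : NNReal, LipschitzWith K w) ∧
          IsZPeriodic w ∧ IsCellSubsolution H P a w } ∧
    c = sSup { a : ℝ | ∃ w : Euc N → ℝ, (∃ K : NNReal, LipschitzWith K w) ∧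
          IsZPeriodic w ∧ IsCellSupersolution H P a w } :=
  critical_value_unique_and_characterized_general H hHc hHp P u v c d hu hv
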